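/- (Amalgamation Lemma, UFIS case.) Let G = ⊕_{i=1}^r ⊕_{j=1}^{k_i} C_{p_i^{α_{i,j}}} with distinct primes p_1, …, p_r and α_{i,1} ≥ α_{i,2} ≥ ··· ≥ α_{i,k_i} ≥ 1 for each i (setting α_{i,j} = 0 for j > k_i). Suppose α_{i,1} > α_{i,2} for some i ∈ [1, r], and let ℓ be a positive integer divisible by p_i^{α_{i,2}+1}. If S is a dense UFIS over G, then S contains at most p_i elements of order ℓ, i.e. |{(g,n) ∈ S : ord(g) = ℓ}| ≤ p_i. -/

import Mathlib

open Finset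

def IsIndexedSeq {G : Type*} [AddCommGroup G] (S : Finset (G × ℕ)) : Prop :=
  ∀ x ∈ S, x.1 ≠ 0

def seqSum {G : Type*} [AddCommGroup G] (S : Finset (G × ℕ)) : G :=
  ∑ x ∈ S, x.1

noncomputable def crossNum {G : Type*} [AddCommGroup G] (S : Finset (G × ℕ)) : ℝ :=
  ∑ x ∈ S, (1 : ℝ) / (addOrderOf x.1 : ℝ)

def ZeroSumFree {G : Type*} [AddCommGroup G] (S : Finset (G × ℕ)) : Prop :=
  ∀ T ⊆ S, T.Nonempty → seqSum T ≠ 0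

def IsIrreducibleSeq {G : Type*} [AddCommGroup G] (S : Finset (G × ℕ)) : Prop :=
  S.Nonempty ∧ seqSum S = 0 ∧ ∀ T ⊆ S, T.Nonempty → T ≠ S → seqSum T ≠ 0

def IsFactorization {G : Type*} [AddCommGroup G] (S : Finset (G × ℕ))
    (F : Finset (Finset (G × ℕ))) : Prop :=
  (∀ A ∈ F, IsIrreducibleSeq A) ∧
    (∀ A ∈ F, ∀ B ∈ F, A ≠ B → Disjoint A B) ∧
    (∀ x, x ∈ S ↔ ∃ A ∈ F, x ∈ A)

def IsUFIS {G : Type*} [AddCommGroup G] (S : Finset (G × ℕ)) : Prop :=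
  IsIndexedSeq S ∧ seqSum S = 0 ∧ ∃! F, IsFactorization S F

noncomputable def littleK (G : Type*) [AddCommGroup G] : ℝ :=
  sSup {x : ℝ | ∃ S : Finset (G × ℕ), IsIndexedSeq S ∧ ZeroSumFree S ∧ crossNum S = x}

noncomputable def bigK (G : Type*) [AddCommGroup G] : ℝ :=
  sSup {x : ℝ | ∃ S : Finset (G × ℕ), IsIndexedSeq S ∧ IsIrreducibleSeq S ∧ crossNum S = x}

noncomputable def K1 (G : Type*) [AddCommGroup G] : ℝ :=
  sSup {x : ℝ | ∃ S : Finset (G × ℕ), IsUFIS S ∧ crossNum S = x}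

def DenseZSF {G : Type*} [AddCommGroup G] (S : Finset (G × ℕ)) : Prop :=
  IsIndexedSeq S ∧ ZeroSumFree S ∧ crossNum S = littleK G ∧
    ∀ T : Finset (G × ℕ), IsIndexedSeq T → ZeroSumFree T → crossNum T = littleK G →
      S.card ≤ T.card

def DenseUFIS {G : Type*} [AddCommGroup G] (S : Finset (G × ℕ)) : Prop :=
  IsUFIS S ∧ crossNum S = K1 G ∧
    ∀ T : Finset (G × ℕ), IsUFIS T → crossNum T = K1 G → S.card ≤ T.card

def WidePrime (p n : ℕ) : Prop :=
  ¬ p ∣ n ∧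
    (p : ℝ) / ((p : ℝ) - 1) ≥
      ∏ q ∈ n.primeFactors,
        ((q : ℝ) ^ (n.factorization q + 1) - 1) /
          ((q : ℝ) ^ (n.factorization q + 1) - (q : ℝ) ^ (n.factorization q))

def Wide2Prime (p n : ℕ) : Prop :=
  ¬ p ∣ n ∧
    ((p : ℝ) ^ 2 + 2 * (p : ℝ) - 2) / (p : ℝ) ^ 2 ≥
      ∏ q ∈ n.primeFactors,
        ((q : ℝ) ^ (n.factorization q + 1) - 1) /
          ((q : ℝ) ^ (n.factorization q + 1) - (q : ℝ) ^ (n.factorization q))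

def IsWideNat (n : ℕ) : Prop :=
  0 < n ∧ ∀ q ∈ n.primeFactors,
    WidePrime q (∏ q' ∈ n.primeFactors.filter (fun q' => q < q'), q' ^ n.factorization q')

def Is2WideNat (n : ℕ) : Prop :=
  0 < n ∧ ∀ q ∈ n.primeFactors,
    Wide2Prime q (∏ q' ∈ n.primeFactors.filter (fun q' => q < q'), q' ^ n.factorization q')

/-!
Suppose a dense UFIS `S` had more than `p = p_{i₀}` elements of order `l`. Multiplying by `l / p`
and projecting to the largest cyclic `p`-factor sends each of them to a nonzero element of the
order-`p` subgroup of a cyclic group, and since `p ^ (α_{i₀,2} + 1) ∣ l`, an element killed by `l`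
is killed by `l / p` as soon as this projection vanishes. As `p - 1` nonzero elements of a group of
order `p` represent all of it as subsums, some `2 ≤ |T| ≤ p` of them have a sum `h` in the kernel,
and unique factorization allows `h ≠ 0`. Then `ord h ≤ l / p`, so replacing `T` by the single
element `h` gives a UFIS whose cross number is at least `k(S) - p/l + p/l`, with fewer elements.
-/

section

variable {G : Type*} [AddCommGroup G]

lemma seqSum_sdiff [DecidableEq G] {S T : Finset (G × ℕ)} (h : T ⊆ S) :
    seqSum (S \ T) = seqSum S - seqSum T :=
  eq_sub_of_add_eq (Finset.sum_sdiff h)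

lemma exists_irreducible_subset {S : Finset (G × ℕ)} (hne : S.Nonempty) (hz : seqSum S = 0) :
    ∃ A ⊆ S, IsIrreducibleSeq A := by
  obtain ⟨A, hAS, hA⟩ :=
    exists_minimal_le_of_wellFoundedLT (fun A => A.Nonempty ∧ seqSum A = 0) S ⟨hne, hz⟩
  refine ⟨A, hAS, hA.prop.1, hA.prop.2, fun T hTA hTne hTA' hTz => hTA' ?_⟩
  exact hTA.antisymm (hA.le_of_le ⟨hTne, hTz⟩ hTA)

namespace IsFactorization

variable {S : Finset (G × ℕ)} {F : Finset (Finset (G × ℕ))}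

lemma subset (hF : IsFactorization S F) {A : Finset (G × ℕ)} (hA : A ∈ F) : A ⊆ S :=
  fun x hx => (hF.2.2 x).mpr ⟨A, hA, hx⟩

lemma insert_sdiff [DecidableEq G] {A : Finset (G × ℕ)} (hA : IsIrreducibleSeq A) (hAS : A ⊆ S)
    (hF : IsFactorization (S \ A) F) : IsFactorization S (insert A F) := by
  have hdisj : ∀ B ∈ F, Disjoint A B := fun B hB =>
    Finset.disjoint_left.mpr fun x hxA hxB => (Finset.mem_sdiff.mp (hF.subset hB hxB)).2 hxA
  refine ⟨?_, ?_, fun x => ?_⟩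
  · simpa [hA] using hF.1
  · simp only [Finset.mem_insert]
    rintro B (rfl | hB) C (rfl | hC) hBC
    exacts [absurd rfl hBC, hdisj C hC, (hdisj B hB).symm, hF.2.1 B hB C hC hBC]
  · by_cases hxA : x ∈ A
    · exact ⟨fun _ => ⟨A, Finset.mem_insert_self _ _, hxA⟩, fun _ => hAS hxA⟩
    · simp [← hF.2.2, hxA]

lemma eq_biUnion [DecidableEq G] (hF : IsFactorization S F) : S = F.biUnion id := by
  ext x; simp [hF.2.2 x]

lemma seqSum_eq_zero [DecidableEq G] (hF : IsFactorization S F) : seqSum S = 0 := by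
  rw [hF.eq_biUnion, seqSum, Finset.sum_biUnion (t := id) fun A hA B hB => hF.2.1 A hA B hB]
  exact Finset.sum_eq_zero fun A hA => (hF.1 A hA).2.1

lemma filter [DecidableEq G] (hF : IsFactorization S F) (P : Finset (G × ℕ) → Prop)
    [DecidablePred P] : IsFactorization ((F.filter P).biUnion id) (F.filter P) := by
  refine ⟨fun A hA => hF.1 A (Finset.mem_of_mem_filter A hA),
    fun A hA B hB => hF.2.1 A (Finset.mem_of_mem_filter A hA) B (Finset.mem_of_mem_filter B hB),
    fun x => ?_⟩
  simp

end IsFactorization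

lemma exists_factorization [DecidableEq G] (S : Finset (G × ℕ)) (hz : seqSum S = 0) :
    ∃ F, IsFactorization S F := by
  induction S using Finset.strongInduction with
  | _ S ih =>
    rcases S.eq_empty_or_nonempty with rfl | hne
    · exact ⟨∅, by simp [IsFactorization]⟩
    obtain ⟨A, hAS, hA⟩ := exists_irreducible_subset hne hz
    have hz' : seqSum (S \ A) = 0 := by rw [seqSum_sdiff hAS, hz, hA.2.1, sub_zero]
    obtain ⟨F, hF⟩ := ih _ (Finset.sdiff_ssubset hAS hA.1) hz'
    exact ⟨insert A F, hF.insert_sdiff hA hAS⟩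

lemma exists_irreducible_subset_mem [DecidableEq G] {S : Finset (G × ℕ)} (hz : seqSum S = 0)
    {x : G × ℕ} (hx : x ∈ S) : ∃ A ⊆ S, IsIrreducibleSeq A ∧ x ∈ A := by
  obtain ⟨F, hF⟩ := exists_factorization S hz
  obtain ⟨A, hA, hxA⟩ := (hF.2.2 x).mp hx
  exact ⟨A, hF.subset hA, hF.1 A hA, hxA⟩

namespace IsUFIS

variable [DecidableEq G] {S : Finset (G × ℕ)}

lemma pairwiseDisjoint (hS : IsUFIS S) :
    {A | A ⊆ S ∧ IsIrreducibleSeq A}.PairwiseDisjoint id := by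
  obtain ⟨-, hz, F, hF, huniq⟩ := hS
  have hmem : ∀ A ⊆ S, IsIrreducibleSeq A → A ∈ F := fun A hAS hA => by
    have hz' : seqSum (S \ A) = 0 := by rw [seqSum_sdiff hAS, hz, hA.2.1, sub_zero]
    obtain ⟨F', hF'⟩ := exists_factorization (S \ A) hz'
    exact huniq _ (hF'.insert_sdiff hA hAS) ▸ Finset.mem_insert_self A F'
  exact fun A hA B hB hAB => hF.2.1 A (hmem A hA.1 hA.2) B (hmem B hB.1 hB.2) hAB

lemma eq_of_not_disjoint (hS : IsUFIS S) {A B : Finset (G × ℕ)} (hAS : A ⊆ S)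
    (hA : IsIrreducibleSeq A) (hBS : B ⊆ S) (hB : IsIrreducibleSeq B) (hAB : ¬ Disjoint A B) :
    A = B := by
  by_contra hne
  exact hAB (hS.pairwiseDisjoint ⟨hAS, hA⟩ ⟨hBS, hB⟩ hne)

lemma of_pairwiseDisjoint (hind : IsIndexedSeq S) (hz : seqSum S = 0)
    (hd : {A | A ⊆ S ∧ IsIrreducibleSeq A}.PairwiseDisjoint id) : IsUFIS S := by
  have hmem : ∀ F, IsFactorization S F → ∀ A ⊆ S, IsIrreducibleSeq A → A ∈ F := by
    intro F hF A hAS hA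
    obtain ⟨x, hxA⟩ := hA.1
    obtain ⟨P, hP, hxP⟩ := (hF.2.2 x).mp (hAS hxA)
    by_contra hAF
    have hAP : A ≠ P := fun h => hAF (h ▸ hP)
    exact Finset.disjoint_left.mp (hd ⟨hAS, hA⟩ ⟨hF.subset hP, hF.1 P hP⟩ hAP) hxA hxP
  obtain ⟨F, hF⟩ := exists_factorization S hz
  refine ⟨hind, hz, F, hF, fun F' hF' => ?_⟩
  have hsub : ∀ {F₁ F₂}, IsFactorization S F₁ → IsFactorization S F₂ → F₁ ⊆ F₂ :=
    fun h₁ h₂ A hA => hmem _ h₂ A (h₁.subset hA) (h₁.1 A hA)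
  exact (hsub hF' hF).antisymm (hsub hF hF')

lemma subset_of_not_disjoint (hS : IsUFIS S) {A C : Finset (G × ℕ)} (hAS : A ⊆ S)
    (hA : IsIrreducibleSeq A) (hCS : C ⊆ S) (hC : seqSum C = 0) (hAC : ¬ Disjoint A C) :
    A ⊆ C := by
  obtain ⟨x, hxA, hxC⟩ := Finset.not_disjoint_iff.mp hAC
  obtain ⟨P, hPC, hP, hxP⟩ := exists_irreducible_subset_mem hC hxC
  have hAP := hS.eq_of_not_disjoint hAS hA (hPC.trans hCS) hP
    (Finset.not_disjoint_iff.mpr ⟨x, hxA, hxP⟩)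
  exact hAP ▸ hPC

end IsUFIS

namespace IsUFIS

variable [DecidableEq G] {S T : Finset (G × ℕ)}

-- `U` is the union of the atoms of `S` that meet `T`.
lemma exists_zeroSum_hull (hS : IsUFIS S) (hTS : T ⊆ S) :
    ∃ U ⊆ S, T ⊆ U ∧ seqSum U = 0 ∧ (∀ C ⊆ S, seqSum C = 0 → T ⊆ C → U ⊆ C) ∧
      ∀ A ⊆ S, IsIrreducibleSeq A → Disjoint A T → Disjoint A U := by
  obtain ⟨F, hF, -⟩ := hS.2.2
  have hmem : ∀ {x}, x ∈ (F.filter fun A => ¬ Disjoint A T).biUnion id ↔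
      ∃ A ∈ F, ¬ Disjoint A T ∧ x ∈ A := by
    simp [and_assoc]
  refine ⟨_, fun x hx => ?_, fun x hx => ?_, (hF.filter fun A => ¬ Disjoint A T).seqSum_eq_zero,
    fun C hCS hC hTC x hx => ?_, fun A hAS hA hAT => Finset.disjoint_left.mpr ?_⟩
  · obtain ⟨A, hA, -, hxA⟩ := hmem.mp hx
    exact hF.subset hA hxA
  · obtain ⟨A, hA, hxA⟩ := (hF.2.2 x).mp (hTS hx)
    exact hmem.mpr ⟨A, hA, Finset.not_disjoint_iff.mpr ⟨x, hxA, hx⟩, hxA⟩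
  · obtain ⟨A, hA, hAT, hxA⟩ := hmem.mp hx
    refine hS.subset_of_not_disjoint (hF.subset hA) (hF.1 A hA) hCS hC (fun hAC => hAT ?_) hxA
    exact hAC.mono_right hTC
  · intro x hxA hx
    obtain ⟨P, hP, hPT, hxP⟩ := hmem.mp hx
    have hAP := hS.eq_of_not_disjoint hAS hA (hF.subset hP) (hF.1 P hP)
      (Finset.not_disjoint_iff.mpr ⟨x, hxA, hxP⟩)
    exact hPT (hAP ▸ hAT)

/-- An irreducible subset through the new element must be `{σ(T)} ∪ (U \ T)` for the hull `U`
of `T`, so distinct irreducible subsets stay disjoint. -/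
theorem insert_sdiff (hS : IsUFIS S) (hTS : T ⊆ S) (hT : seqSum T ≠ 0) {n : ℕ}
    (hn : (seqSum T, n) ∉ S) : IsUFIS (insert (seqSum T, n) (S \ T)) := by
  obtain ⟨U, hUS, hTU, hUz, hUmin, hUdisj⟩ := hS.exists_zeroSum_hull hTS
  set e : G × ℕ := (seqSum T, n)
  have heS : e ∉ S \ T := fun h => hn (Finset.mem_sdiff.mp h).1
  have hST : seqSum (S \ T) = -seqSum T := by rw [seqSum_sdiff hTS, hS.2.1, zero_sub]
  have hUT : seqSum (U \ T) = -seqSum T := by rw [seqSum_sdiff hTU, hUz, zero_sub]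
  have hirr_mem : ∀ A ⊆ insert e (S \ T), IsIrreducibleSeq A → e ∈ A →
      A = insert e (U \ T) := by
    intro A hAS hA heA
    have hAe : A.erase e ⊆ S \ T := Finset.subset_insert_iff.mp hAS
    have hdisj : Disjoint (A.erase e) T :=
      Finset.disjoint_left.mpr fun x hx hxT => (Finset.mem_sdiff.mp (hAe hx)).2 hxT
    have hC : seqSum (A.erase e ∪ T) = 0 := by
      rw [seqSum, Finset.sum_union hdisj, Finset.sum_erase_eq_sub heA]
      change seqSum A - seqSum T + seqSum T = 0
      rw [hA.2.1, zero_sub, neg_add_cancel]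
    have hUC := hUmin _ (Finset.union_subset (hAe.trans Finset.sdiff_subset) hTS) hC
      Finset.subset_union_right
    have hBA : insert e (U \ T) ⊆ A := by
      refine Finset.insert_subset heA fun x hx => ?_
      obtain ⟨hxU, hxT⟩ := Finset.mem_sdiff.mp hx
      exact Finset.mem_of_mem_erase ((Finset.mem_union.mp (hUC hxU)).resolve_right hxT)
    by_contra hne
    refine hA.2.2 _ hBA (Finset.insert_nonempty _ _) (Ne.symm hne) ?_
    rw [seqSum, Finset.sum_insert fun h => hn (hUS (Finset.mem_sdiff.mp h).1), ← seqSum, hUT,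
      add_neg_cancel]
  have hsub : ∀ {A}, A ⊆ insert e (S \ T) → e ∉ A → A ⊆ S \ T :=
    fun hAS heA => (Finset.subset_insert_iff_of_notMem heA).mp hAS
  have hmixed : ∀ {A B}, A ⊆ insert e (S \ T) → IsIrreducibleSeq A → B ⊆ insert e (S \ T) →
      IsIrreducibleSeq B → e ∈ A → e ∉ B → Disjoint A B := by
    intro A B hAS hA hBS hB heA heB
    have hBT : Disjoint B T := Finset.disjoint_left.mpr fun x hx hxT =>
      (Finset.mem_sdiff.mp (hsub hBS heB hx)).2 hxT
    rw [hirr_mem A hAS hA heA, Finset.disjoint_insert_left]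
    exact ⟨heB, (hUdisj B ((hsub hBS heB).trans Finset.sdiff_subset) hB hBT).symm.mono_left
      Finset.sdiff_subset⟩
  refine of_pairwiseDisjoint (fun x hx => ?_) ?_ ?_
  · rcases Finset.mem_insert.mp hx with rfl | hx
    exacts [hT, hS.1 x (Finset.mem_sdiff.mp hx).1]
  · rw [seqSum, Finset.sum_insert heS]
    change seqSum T + seqSum (S \ T) = 0
    rw [hST, add_neg_cancel]
  · rintro A ⟨hAS, hA⟩ B ⟨hBS, hB⟩ hAB
    by_cases heA : e ∈ A <;> by_cases heB : e ∈ B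
    · exact absurd ((hirr_mem A hAS hA heA).trans (hirr_mem B hBS hB heB).symm) hAB
    · exact hmixed hAS hA hBS hB heA heB
    · exact (hmixed hBS hB hAS hA heB heA).symm
    · exact hS.pairwiseDisjoint ⟨(hsub hAS heA).trans Finset.sdiff_subset, hA⟩
        ⟨(hsub hBS heB).trans Finset.sdiff_subset, hB⟩ hAB

end IsUFIS

lemma crossNum_mono {S T : Finset (G × ℕ)} (hTS : T ⊆ S) : crossNum T ≤ crossNum S :=
  Finset.sum_le_sum_of_subset_of_nonneg hTS fun _ _ _ => by positivity

lemma crossNum_eq_card_div {S : Finset (G × ℕ)} {l : ℕ} (hS : ∀ x ∈ S, addOrderOf x.1 = l) :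
    crossNum S = #S / l := by
  rw [crossNum, Finset.sum_congr rfl fun x hx => by rw [hS x hx], Finset.sum_const,
    nsmul_eq_mul, mul_one_div]

/-- Otherwise amalgamating `T` would give a UFIS of cross number `K₁(G)` with fewer elements.
`0 < K1 G` excludes the junk value `sSup = 0` of an unbounded set. -/
theorem DenseUFIS.one_div_addOrderOf_lt_crossNum [DecidableEq G] {S T : Finset (G × ℕ)}
    (hS : DenseUFIS S) (hK : 0 < K1 G) (hTS : T ⊆ S) (hT : 2 ≤ #T) (hσ : seqSum T ≠ 0) :
    1 / (addOrderOf (seqSum T) : ℝ) < crossNum T := by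
  by_contra! hle
  obtain ⟨hU, hSK, hmin⟩ := hS
  obtain ⟨n, hn'⟩ := Infinite.exists_notMem_finset (S.image Prod.snd)
  have hn : (seqSum T, n) ∉ S := fun h => hn' (Finset.mem_image_of_mem Prod.snd h)
  have heS : (seqSum T, n) ∉ S \ T := fun h => hn (Finset.mem_sdiff.mp h).1
  have hbdd : BddAbove {x | ∃ S : Finset (G × ℕ), IsUFIS S ∧ crossNum S = x} := by
    by_contra h
    exact hK.ne' (Real.sSup_of_not_bddAbove h)
  have hS' := hU.insert_sdiff hTS hσ hn
  have hK' : crossNum (insert (seqSum T, n) (S \ T)) = K1 G := by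
    refine le_antisymm (le_csSup hbdd ⟨_, hS', rfl⟩) ?_
    rw [← hSK]
    unfold crossNum
    rw [Finset.sum_insert heS, Finset.sum_sdiff_eq_sub hTS]
    change crossNum S ≤ _ + (crossNum S - crossNum T)
    linarith
  have hcard := hmin _ hS' hK'
  rw [Finset.card_insert_of_notMem heS, Finset.card_sdiff_of_subset hTS] at hcard
  have := Finset.card_le_card hTS
  omega

section SubsetSums

variable {ι H : Type*} [DecidableEq ι] [AddCommGroup H] [DecidableEq H]

def subsetSums (y : ι → H) (V : Finset ι) : Finset H :=
  V.powerset.image fun B => ∑ v ∈ B, y v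

lemma subsetSums_insert (y : ι → H) {V : Finset ι} {a : ι} (ha : a ∉ V) :
    subsetSums y (insert a V) = subsetSums y V ∪ (subsetSums y V).image (y a + ·) := by
  rw [subsetSums, Finset.powerset_insert, Finset.image_union, Finset.image_image, subsetSums,
    Finset.image_image]
  congr 1
  refine Finset.image_congr fun B hB => ?_
  simp only [Function.comp_apply]
  rw [Finset.sum_insert fun haB => ha (Finset.mem_powerset.mp hB haB)]

/-- Each new element of order `p` adds a new subsum, unless the subsums already contain its
`p` multiples. -/
lemma min_le_card_subsetSums {p : ℕ} (hp : p.Prime) (y : ι → H) {V : Finset ι}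
    (hy : ∀ v ∈ V, y v ≠ 0 ∧ p • y v = 0) : min (#V + 1) p ≤ #(subsetSums y V) := by
  induction V using Finset.induction_on with
  | empty => simp [subsetSums]
  | @insert a V ha ih =>
    have ih := ih fun v hv => hy v (Finset.mem_insert_of_mem hv)
    rw [subsetSums_insert y ha, Finset.card_insert_of_notMem ha]
    by_cases hcl : (subsetSums y V).image (y a + ·) ⊆ subsetSums y V
    · have hmul : ∀ c : ℕ, c • y a ∈ subsetSums y V := by
        intro c
        induction c with
        | zero => exact Finset.mem_image.mpr ⟨∅, Finset.empty_mem_powerset V, by simp⟩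
        | succ c ihc => exact succ_nsmul' (y a) c ▸ hcl (Finset.mem_image_of_mem _ ihc)
      have : Fact p.Prime := ⟨hp⟩
      have hord : addOrderOf (y a) = p :=
        addOrderOf_eq_prime (hy a (Finset.mem_insert_self a V)).2
          (hy a (Finset.mem_insert_self a V)).1
      have hinj : Set.InjOn (· • y a) (Finset.range p : Set ℕ) := by
        rw [Finset.coe_range, ← hord]
        exact nsmul_injOn_Iio_addOrderOf
      calc min (#V + 1 + 1) p ≤ #((Finset.range p).image (· • y a)) := by
            rw [Finset.card_image_of_injOn hinj, Finset.card_range]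
            exact min_le_right _ _
        _ ≤ _ := Finset.card_le_card fun x hx => by
            obtain ⟨c, -, rfl⟩ := Finset.mem_image.mp hx
            exact Finset.mem_union_left _ (hmul c)
    · obtain ⟨s, hs, hsV⟩ := Finset.not_subset.mp hcl
      have : #(insert s (subsetSums y V)) ≤ #(subsetSums y V ∪ _) :=
        Finset.card_le_card (Finset.insert_subset (Finset.mem_union_right _ hs)
          Finset.subset_union_left)
      rw [Finset.card_insert_of_notMem hsV] at this
      omega

theorem exists_subset_sum_eq [Fintype H] [IsAddCyclic H] {p : ℕ} (hp : p.Prime) (y : ι → H)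
    {V : Finset ι} (hV : p - 1 ≤ #V) (hy : ∀ v ∈ V, y v ≠ 0 ∧ p • y v = 0) {z : H}
    (hz : p • z = 0) : ∃ B ⊆ V, #B ≤ p - 1 ∧ ∑ v ∈ B, y v = z := by
  obtain ⟨V', hV'V, hV'⟩ := Finset.exists_subset_card_eq hV
  have htors : subsetSums y V' ⊆ Finset.univ.filter (p • · = 0) := by
    intro s hs
    obtain ⟨B, hB, rfl⟩ := Finset.mem_image.mp hs
    simpa [Finset.smul_sum] using Finset.sum_eq_zero fun v hv =>
      (hy v (hV'V (Finset.mem_powerset.mp hB hv))).2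
  have hcard := min_le_card_subsetSums hp y fun v hv => hy v (hV'V hv)
  have heq : subsetSums y V' = Finset.univ.filter (p • · = 0) := by
    refine Finset.eq_of_subset_of_card_le htors ?_
    have := IsAddCyclic.card_nsmul_eq_zero_le (α := H) hp.pos
    have := hp.pos
    rw [hV'] at hcard
    omega
  obtain ⟨B, hB, hBz⟩ := Finset.mem_image.mp (heq ▸ Finset.mem_filter.mpr ⟨Finset.mem_univ z, hz⟩)
  have hBV' := Finset.mem_powerset.mp hB
  exact ⟨B, hBV'.trans hV'V, hV' ▸ Finset.card_le_card hBV', hBz⟩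

end SubsetSums

section Torsion

variable {H : Type*} [AddCommGroup H] [DecidableEq H] [Fintype H] [IsAddCyclic H]
  [DecidableEq G] {p : ℕ}

lemma exists_subset_map_seqSum_insert_eq_zero (hp : p.Prime) (φ : G →+ H) {w : G × ℕ}
    {V : Finset (G × ℕ)} (hwV : w ∉ V) (hV : p - 1 ≤ #V) (hw : φ w.1 ≠ 0 ∧ p • φ w.1 = 0)
    (hφ : ∀ v ∈ V, φ v.1 ≠ 0 ∧ p • φ v.1 = 0) :
    ∃ B ⊆ V, B.Nonempty ∧ #B ≤ p - 1 ∧ φ (seqSum (insert w B)) = 0 := by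
  obtain ⟨B, hBV, hB, hBsum⟩ :=
    exists_subset_sum_eq hp (fun x => φ x.1) hV hφ (z := -φ w.1) (by rw [smul_neg, hw.2, neg_zero])
  refine ⟨B, hBV, Finset.nonempty_iff_ne_empty.mpr fun hB0 => hw.1 ?_, hB, ?_⟩
  · simpa [hB0] using hBsum
  · rw [seqSum, Finset.sum_insert fun h => hwV (hBV h), map_add, map_sum, hBsum, add_neg_cancel]

theorem IsUFIS.exists_subset_map_seqSum_eq_zero (hp : p.Prime) (φ : G →+ H)
    {S W : Finset (G × ℕ)} (hS : IsUFIS S) (hWS : W ⊆ S) (hW : p + 1 ≤ #W)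
    (hφ : ∀ x ∈ W, φ x.1 ≠ 0 ∧ p • φ x.1 = 0) :
    ∃ T ⊆ W, 2 ≤ #T ∧ #T ≤ p ∧ φ (seqSum T) = 0 ∧ seqSum T ≠ 0 := by
  obtain ⟨w, hw⟩ : W.Nonempty := Finset.card_pos.mp (by omega)
  have hφ' : ∀ {V}, V ⊆ W.erase w → ∀ v ∈ V, φ v.1 ≠ 0 ∧ p • φ v.1 = 0 :=
    fun hV v hv => hφ v (Finset.mem_of_mem_erase (hV hv))
  have hsub : ∀ {B}, B ⊆ W.erase w → insert w B ⊆ W :=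
    fun hB => Finset.insert_subset hw (hB.trans (Finset.erase_subset w W))
  have hcard : ∀ {B}, B ⊆ W.erase w → B.Nonempty → #B ≤ p - 1 →
      2 ≤ #(insert w B) ∧ #(insert w B) ≤ p := fun hB hBne hBp => by
    have := hBne.card_pos
    have := hp.pos
    rw [Finset.card_insert_of_notMem fun h => Finset.notMem_erase w W (hB h)]
    omega
  obtain ⟨B₁, hB₁, hB₁ne, hB₁p, hB₁φ⟩ := exists_subset_map_seqSum_insert_eq_zero hp φ
    (Finset.notMem_erase w W) (by rw [Finset.card_erase_of_mem hw]; omega) (hφ w hw) (hφ' le_rfl)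
  by_cases hz₁ : seqSum (insert w B₁) ≠ 0
  · exact ⟨_, hsub hB₁, hcard hB₁ hB₁ne hB₁p |>.1, hcard hB₁ hB₁ne hB₁p |>.2, hB₁φ, hz₁⟩
  -- The atom through `w` inside the zero-sum `insert w B₁` has a second element `u`; a second
  -- attempt avoiding `u` cannot be zero-sum, as it would have to contain that whole atom.
  obtain ⟨A, hAT, hA, hwA⟩ := exists_irreducible_subset_mem (not_not.mp hz₁) (Finset.mem_insert_self w B₁)
  have hAS : A ⊆ S := hAT.trans ((hsub hB₁).trans hWS)
  obtain ⟨u, huA, huw⟩ : ∃ u ∈ A, u ≠ w := by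
    by_contra! h
    have hAw : A = {w} := Finset.eq_singleton_iff_unique_mem.mpr ⟨hwA, h⟩
    exact hS.1 w (hWS hw) (by simpa [hAw, seqSum] using hA.2.1)
  have hV₂ : (W.erase w).erase u ⊆ W.erase w := Finset.erase_subset u _
  obtain ⟨B₂, hB₂, hB₂ne, hB₂p, hB₂φ⟩ := exists_subset_map_seqSum_insert_eq_zero hp φ
    (fun h => Finset.notMem_erase w W (hV₂ h))
    (by have := Finset.pred_card_le_card_erase (s := W.erase w) (a := u)
        rw [Finset.card_erase_of_mem hw] at this; omega)
    (hφ w hw) (hφ' hV₂)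
  refine ⟨_, hsub (hB₂.trans hV₂), hcard (hB₂.trans hV₂) hB₂ne hB₂p |>.1,
    hcard (hB₂.trans hV₂) hB₂ne hB₂p |>.2, hB₂φ, fun hz₂ => ?_⟩
  have hAT₂ := hS.subset_of_not_disjoint hAS hA ((hsub (hB₂.trans hV₂)).trans hWS) hz₂
    (Finset.not_disjoint_iff.mpr ⟨w, hwA, Finset.mem_insert_self w B₂⟩)
  rcases Finset.mem_insert.mp (hAT₂ huA) with h | h
  exacts [huw h, Finset.notMem_erase u _ (hB₂ h)]

end Torsion

theorem DenseUFIS.card_filter_addOrderOf_eq_le [DecidableEq G] {H : Type*} [AddCommGroup H]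
    [DecidableEq H] [Fintype H] [IsAddCyclic H] {S : Finset (G × ℕ)} (hS : DenseUFIS S)
    {q l : ℕ} (hq : q.Prime) (hl : 0 < l) (hql : q ∣ l) (ψ : G →+ H)
    (hψ : ∀ g : G, l • g = 0 → (l / q) • ψ g = 0 → (l / q) • g = 0) :
    #(S.filter fun x => addOrderOf x.1 = l) ≤ q := by
  by_contra! hW
  set W := S.filter fun x => addOrderOf x.1 = l
  have hWl : ∀ x ∈ W, addOrderOf x.1 = l := fun x hx => (Finset.mem_filter.mp hx).2
  have hlq : 0 < l / q := Nat.div_pos (Nat.le_of_dvd hl hql) hq.pos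
  have hφ : ∀ x ∈ W, (l / q) • ψ x.1 ≠ 0 ∧ q • (l / q) • ψ x.1 = 0 := by
    intro x hx
    have hlx : l • x.1 = 0 := hWl x hx ▸ addOrderOf_nsmul_eq_zero x.1
    refine ⟨fun h0 => ?_, ?_⟩
    · have := addOrderOf_le_of_nsmul_eq_zero hlq (hψ _ hlx h0)
      exact (Nat.div_lt_self hl hq.one_lt).not_ge (hWl x hx ▸ this)
    · rw [smul_smul, Nat.mul_div_cancel' hql, ← map_nsmul, hlx, map_zero]
  obtain ⟨T, hTW, hT2, hTq, hφT, hT0⟩ :=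
    hS.1.exists_subset_map_seqSum_eq_zero hq ((l / q) • ψ) (Finset.filter_subset _ S) hW hφ
  have hTl : l • seqSum T = 0 := by
    rw [seqSum, Finset.smul_sum]
    exact Finset.sum_eq_zero fun x hx => hWl x (hTW hx) ▸ addOrderOf_nsmul_eq_zero x.1
  have hord : addOrderOf (seqSum T) * q ≤ l := Nat.le_of_dvd hl <|
    (Nat.mul_dvd_mul_right (addOrderOf_dvd_of_nsmul_eq_zero (hψ _ hTl hφT)) q).trans
      (Nat.div_mul_cancel hql).dvd
  have hordpos : 0 < addOrderOf (seqSum T) :=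
    Nat.pos_of_dvd_of_pos (addOrderOf_dvd_of_nsmul_eq_zero (hψ _ hTl hφT)) hlq
  have hK : 0 < K1 G := hS.2.1 ▸ (crossNum_mono (Finset.filter_subset _ S)).trans_lt' (by
    rw [crossNum_eq_card_div hWl]
    exact div_pos (Nat.cast_pos.mpr (Nat.zero_lt_of_lt hW)) (Nat.cast_pos.mpr hl))
  have hlt := hS.one_div_addOrderOf_lt_crossNum hK (hTW.trans (Finset.filter_subset _ S)) hT2 hT0
  rw [crossNum_eq_card_div fun x hx => hWl x (hTW hx)] at hlt
  refine hlt.not_ge ?_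
  calc (#T : ℝ) / l ≤ q / l := by gcongr
    _ ≤ 1 / addOrderOf (seqSum T) := by
      rw [div_le_div_iff₀ (Nat.cast_pos.mpr hl) (Nat.cast_pos.mpr hordpos), one_mul, mul_comm]
      exact_mod_cast hord

end

lemma nsmul_div_eq_zero_of_coprime {A : Type*} [AddCommGroup A] {x : A} {l n q : ℕ}
    (hq : q ∣ l) (hl : l • x = 0) (hn : n • x = 0) (hqn : Nat.Coprime q n) : (l / q) • x = 0 := by
  have hcop : (addOrderOf x).Coprime q :=
    hqn.symm.coprime_dvd_left (addOrderOf_dvd_of_nsmul_eq_zero hn)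
  rw [← Nat.div_mul_cancel hq] at hl
  exact addOrderOf_dvd_iff_nsmul_eq_zero.mp
    (hcop.dvd_of_dvd_mul_right (addOrderOf_dvd_of_nsmul_eq_zero hl))

/-- Indices are `0`-based: `α i 0` is the paper's `α_{i,1}`, so `g i₀ ⟨0, hk⟩` is the coordinate
of `g` in the largest cyclic `p_{i₀}`-factor. -/
lemma nsmul_div_eq_zero_of_apply_zero {r : ℕ} {p k : Fin r → ℕ} {α : Fin r → ℕ → ℕ}
    (hp : ∀ i, (p i).Prime) (hinj : Function.Injective p)
    (hmono : ∀ i, ∀ j j' : ℕ, j ≤ j' → j' < k i → α i j' ≤ α i j)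
    {i₀ : Fin r} (hk : 0 < k i₀) {l : ℕ} (hdvd : p i₀ ^ (α i₀ 1 + 1) ∣ l)
    (g : (i : Fin r) → (j : Fin (k i)) → ZMod (p i ^ α i j.val)) (hg : l • g = 0)
    (hg₀ : (l / p i₀) • g i₀ ⟨0, hk⟩ = 0) : (l / p i₀) • g = 0 := by
  funext i j
  change (l / p i₀) • g i j = 0
  have hl : l • g i j = 0 := congrFun (congrFun hg i) j
  have hn : (p i ^ α i j) • g i j = 0 := by rw [nsmul_eq_mul, ZMod.natCast_self, zero_mul]
  rcases eq_or_ne i i₀ with rfl | hi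
  · rcases Nat.eq_zero_or_pos j.val with hj | hj
    · exact (Fin.ext hj : j = ⟨0, hk⟩) ▸ hg₀
    have hdiv : p i ^ α i j ∣ l / p i := by
      refine (pow_dvd_pow _ (hmono i 1 j hj j.2)).trans (Nat.dvd_div_of_mul_dvd ?_)
      rwa [← pow_succ']
    exact addOrderOf_dvd_iff_nsmul_eq_zero.mp ((addOrderOf_dvd_of_nsmul_eq_zero hn).trans hdiv)
  · have hq : p i₀ ∣ l := (dvd_pow_self _ (Nat.succ_ne_zero _)).trans hdvd
    exact nsmul_div_eq_zero_of_coprime hq hl hn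
      (((Nat.coprime_primes (hp i₀) (hp i)).mpr (hinj.ne hi.symm)).pow_right _)

theorem stmt6_general (r : ℕ) (p k : Fin r → ℕ) (α : Fin r → ℕ → ℕ)
    (hp : ∀ i, (p i).Prime) (hinj : Function.Injective p)
    (hk : ∀ i, 1 ≤ k i)
    (hmono : ∀ i, ∀ j j' : ℕ, j ≤ j' → j' < k i → α i j' ≤ α i j)
    (i₀ : Fin r)
    (l : ℕ) (hl : 0 < l) (hdvd : p i₀ ^ (α i₀ 1 + 1) ∣ l)
    (S : Finset (((i : Fin r) → (j : Fin (k i)) → ZMod (p i ^ α i j.val)) × ℕ))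
    (hS : DenseUFIS S) :
    (S.filter (fun x => addOrderOf x.1 = l)).card ≤ p i₀ := by
  classical
  have : NeZero (p i₀ ^ α i₀ 0) := ⟨pow_ne_zero _ (hp i₀).ne_zero⟩
  exact hS.card_filter_addOrderOf_eq_le (hp i₀) hl
    ((dvd_pow_self _ (Nat.succ_ne_zero _)).trans hdvd)
    ((Pi.evalAddMonoidHom (fun j : Fin (k i₀) => ZMod (p i₀ ^ α i₀ j.val)) ⟨0, hk i₀⟩).comp
      (Pi.evalAddMonoidHom (fun i => (j : Fin (k i)) → ZMod (p i ^ α i j.val)) i₀))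
    (nsmul_div_eq_zero_of_apply_zero hp hinj hmono (hk i₀) hdvd)

theorem stmt6 (r : ℕ) (p k : Fin r → ℕ) (α : Fin r → ℕ → ℕ)
    (hp : ∀ i, (p i).Prime) (hinj : Function.Injective p)
    (hk : ∀ i, 1 ≤ k i)
    (hα1 : ∀ i j, j < k i → 1 ≤ α i j)
    (hmono : ∀ i, ∀ j j' : ℕ, j ≤ j' → j' < k i → α i j' ≤ α i j)
    (hzero : ∀ i j, k i ≤ j → α i j = 0)
    (i₀ : Fin r) (hgt : α i₀ 1 < α i₀ 0)
    (l : ℕ) (hl : 0 < l) (hdvd : p i₀ ^ (α i₀ 1 + 1) ∣ l)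
    (S : Finset (((i : Fin r) → (j : Fin (k i)) → ZMod (p i ^ α i j.val)) × ℕ))
    (hS : DenseUFIS S) :
    (S.filter (fun x => addOrderOf x.1 = l)).card ≤ p i₀ :=
  stmt6_general r p k α hp hinj hk hmono i₀ l hl hdvd S hS
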